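/- arXiv:2303.11656 — 5 statements merged into one kernel-verified Lean document; each statement's English description precedes it below -/
import Mathlib

section
/- For n ≥ 1, the rational function ∏_{i=2}^{n} [2n+2-i]_q / [i]_q, where [d]_q = (q^d - 1)/(q - 1), is a polynomial in q with nonnegative integer coefficients; specifically it equals the generating polynomial of Dyck paths of semilength n by major index. -/
/-- The number of up-steps among the first `k` steps of a path of length `2n`
encoded as `w : Fin (2n) → Bool` (`true` = up-step `(1,1)`, `false` = down-step `(1,-1)`). -/
def upSteps (n : ℕ) (w : Fin (2 * n) → Bool) (k : ℕ) : ℕ :=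
  (Finset.univ.filter (fun i : Fin (2 * n) => (i : ℕ) < k ∧ w i = true)).card

/-- The number of down-steps among the first `k` steps. -/
def downSteps (n : ℕ) (w : Fin (2 * n) → Bool) (k : ℕ) : ℕ :=
  (Finset.univ.filter (fun i : Fin (2 * n) => (i : ℕ) < k ∧ w i = false)).card

/-- `w` is a Dyck path of semilength `n`: every prefix has at least as many up-steps
as down-steps (the path stays weakly above the x-axis) and it ends at `(2n, 0)`. -/
def IsDyckPath (n : ℕ) (w : Fin (2 * n) → Bool) : Prop :=
  (∀ k ≤ 2 * n, downSteps n w k ≤ upSteps n w k) ∧ upSteps n w (2 * n) = n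

instance (n : ℕ) : DecidablePred (IsDyckPath n) := fun _ => by
  unfold IsDyckPath; infer_instance

/-- The major index of a Dyck path: the sum of the positions `i` (steps being numbered
`1, …, 2n`) such that step `i` is a down-step and step `i+1` is an up-step. -/
def dyckMajorIndex (n : ℕ) (w : Fin (2 * n) → Bool) : ℕ :=
  ∑ i ∈ Finset.univ.filter
      (fun i : Fin (2 * n) => w i = false ∧ ∃ j : Fin (2 * n), (j : ℕ) = i + 1 ∧ w j = true),
    ((i : ℕ) + 1)

/-- The generating polynomial of Dyck paths of semilength `n` by major index. -/
noncomputable def dyckMajPoly (n : ℕ) : Polynomial ℕ :=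
  ∑ w ∈ Finset.univ.filter (IsDyckPath n), Polynomial.X ^ dyckMajorIndex n w

/-!
Appending a step to a ballot path (a prefix of a Dyck path) of length `m` changes the major
index only when an up-step follows a final down-step, and then by `m`. Hence the generating
polynomial `f m b` of ballot paths of length `m` with `b` down-steps satisfies
`f (m+1) b = f m b + (q^m - 1) g m b + g (m+1) b`, where `g` counts the paths ending with a
down-step and `g (m+1) (b+1) = f m b` when `2b+2 ≤ m+1`. For `q` not a root of unity, the
q-ballot numbers `[m choose b] - q [m choose b-1]` satisfy the same recursion, so they equal
`f m b`; at `m = 2n`, `b = n` this is MacMahon's q-Catalan number `[2n choose n] / [n+1]`.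
-/

open Finset

section Paths

variable {m : ℕ}

def stepCount (v : Bool) (w : Fin m → Bool) (k : ℕ) : ℕ :=
  #{i : Fin m | (i : ℕ) < k ∧ w i = v}

def IsBallot (w : Fin m → Bool) : Prop :=
  ∀ k ≤ m, stepCount false w k ≤ stepCount true w k

def majorIndex (w : Fin m → Bool) : ℕ :=
  ∑ i : Fin m with w i = false ∧ ∃ j : Fin m, (j : ℕ) = i + 1 ∧ w j = true, ((i : ℕ) + 1)

def EndsWithDown (w : Fin m → Bool) : Prop :=
  ∃ i : Fin m, (i : ℕ) + 1 = m ∧ w i = false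

instance : DecidablePred (IsBallot (m := m)) := fun _ => by
  unfold IsBallot; infer_instance

instance : DecidablePred (EndsWithDown (m := m)) := fun _ => by
  unfold EndsWithDown; infer_instance

lemma stepCount_true_add_false (w : Fin m → Bool) :
    stepCount true w m + stepCount false w m = m := by
  simpa [stepCount] using card_filter_add_card_filter_not (s := univ) (fun i => w i = true)

lemma stepCount_snoc_of_le (v c : Bool) (w : Fin m → Bool) {k : ℕ} (hk : k ≤ m) :
    stepCount v (Fin.snoc w c : Fin (m + 1) → Bool) k = stepCount v w k := by
  simp only [stepCount, card_filter, Fin.sum_univ_castSucc, Fin.snoc_castSucc,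
    Fin.val_castSucc, Fin.snoc_last, Fin.val_last]
  simp [show ¬ m < k by omega]

lemma stepCount_snoc_self (v c : Bool) (w : Fin m → Bool) :
    stepCount v (Fin.snoc w c : Fin (m + 1) → Bool) (m + 1) =
      stepCount v w m + if c = v then 1 else 0 := by
  simp only [stepCount, card_filter, Fin.sum_univ_castSucc, Fin.snoc_castSucc,
    Fin.val_castSucc, Fin.snoc_last, Fin.val_last]
  simp

lemma isBallot_snoc_iff (c : Bool) (w : Fin m → Bool) :
    IsBallot (Fin.snoc w c : Fin (m + 1) → Bool) ↔ IsBallot w ∧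
      stepCount false w m + (if c = false then 1 else 0) ≤
        stepCount true w m + if c = true then 1 else 0 := by
  rw [← stepCount_snoc_self, ← stepCount_snoc_self]
  constructor
  · intro h
    refine ⟨fun k hk => ?_, h (m + 1) le_rfl⟩
    simpa only [stepCount_snoc_of_le _ _ _ hk] using h k (by omega)
  · rintro ⟨h, hlast⟩ k hk
    rcases Nat.lt_or_eq_of_le hk with hk | rfl
    · simpa only [stepCount_snoc_of_le _ _ _ (Nat.le_of_lt_succ hk)] using h k (by omega)
    · exact hlast

lemma endsWithDown_snoc_iff (c : Bool) (w : Fin m → Bool) :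
    EndsWithDown (Fin.snoc w c : Fin (m + 1) → Bool) ↔ c = false := by
  constructor
  · rintro ⟨i, hi, hc⟩
    rwa [show i = Fin.last m from Fin.ext (by simp; omega), Fin.snoc_last] at hc
  · rintro rfl
    exact ⟨Fin.last m, by simp, by simp⟩

lemma sum_ite_eq_ite_endsWithDown (c : Bool) (w : Fin m → Bool) :
    (∑ i : Fin m, if w i = false ∧ m = (i : ℕ) + 1 ∧ c = true then (i : ℕ) + 1 else 0) =
      if EndsWithDown w ∧ c = true then m else 0 := by
  by_cases hend : EndsWithDown w
  · obtain ⟨i₀, hi₀, hw₀⟩ := id hend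
    rw [sum_eq_single i₀ (fun i _ hi => if_neg fun h => hi (Fin.ext (by omega))) (by simp)]
    simp [hend, hw₀, hi₀]
  · rw [if_neg fun h => hend h.1]
    exact sum_eq_zero fun i _ => if_neg fun ⟨hw, hi, _⟩ => hend ⟨i, hi.symm, hw⟩

lemma majorIndex_snoc (c : Bool) (w : Fin m → Bool) :
    majorIndex (Fin.snoc w c : Fin (m + 1) → Bool) =
      majorIndex w + if EndsWithDown w ∧ c = true then m else 0 := by
  simp only [majorIndex, sum_filter, Fin.sum_univ_castSucc, Fin.snoc_castSucc, Fin.val_castSucc,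
    Fin.snoc_last, Fin.val_last, Fin.exists_fin_succ']
  have hlast : ¬((∃ i : Fin m, (i : ℕ) = m + 1 ∧ w i = true) ∨ m = m + 1 ∧ c = true) := by
    rintro (⟨i, hi, -⟩ | ⟨h, -⟩) <;> omega
  rw [if_neg fun h => hlast h.2, add_zero, ← sum_ite_eq_ite_endsWithDown, ← sum_add_distrib]
  refine sum_congr rfl fun i _ => ?_
  by_cases hdesc : ∃ j : Fin m, (j : ℕ) = i + 1 ∧ w j = true
  · have hi : m ≠ (i : ℕ) + 1 := by obtain ⟨j, hj, -⟩ := hdesc; omega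
    simp [hdesc, hi]
  · simp [hdesc]

lemma sum_pi_fin_succ_eq_sum_snoc {α M : Type*} [Fintype α] [AddCommMonoid M]
    (f : (Fin (m + 1) → α) → M) :
    ∑ w, f w = ∑ a, ∑ w : Fin m → α, f (Fin.snoc w a) := by
  rw [← (Fin.snocEquiv fun _ => α).sum_comp, Fintype.sum_prod_type]
  rfl

end Paths

section BallotSums

variable {m : ℕ} {R : Type*} [CommRing R] (q : R)

def ballotWeight (b : ℕ) (w : Fin m → Bool) : R :=
  if IsBallot w ∧ stepCount false w m = b then q ^ majorIndex w else 0

def ballotSum (m b : ℕ) : R :=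
  ∑ w : Fin m → Bool, ballotWeight q b w

def ballotSumEndingDown (m b : ℕ) : R :=
  ∑ w : Fin m → Bool, if EndsWithDown w then ballotWeight q b w else 0

lemma ballotWeight_snoc_true (b : ℕ) (w : Fin m → Bool) :
    ballotWeight q b (Fin.snoc w true : Fin (m + 1) → Bool) =
      if EndsWithDown w then q ^ m * ballotWeight q b w else ballotWeight q b w := by
  have hcond : IsBallot (Fin.snoc w true : Fin (m + 1) → Bool) ↔ IsBallot w := by
    rw [isBallot_snoc_iff]
    exact ⟨And.left, fun h => ⟨h, by simpa using Nat.le_succ_of_le (h m le_rfl)⟩⟩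
  simp only [ballotWeight, hcond, stepCount_snoc_self, majorIndex_snoc, Bool.true_eq_false,
    if_false, add_zero, and_true]
  split_ifs <;> simp [pow_add, mul_comm]

lemma ballotWeight_snoc_false (b : ℕ) (w : Fin m → Bool) :
    ballotWeight q (b + 1) (Fin.snoc w false : Fin (m + 1) → Bool) =
      if 2 * (b + 1) ≤ m + 1 then ballotWeight q b w else 0 := by
  have htot := stepCount_true_add_false w
  simp only [ballotWeight, isBallot_snoc_iff, stepCount_snoc_self, majorIndex_snoc, if_true,
    if_false, add_zero, Bool.false_eq_true, and_false, Nat.add_right_cancel_iff]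
  have hcond : ((IsBallot w ∧ stepCount false w m + 1 ≤ stepCount true w m) ∧
      stepCount false w m = b) ↔ 2 * (b + 1) ≤ m + 1 ∧ IsBallot w ∧ stepCount false w m = b :=
    ⟨fun ⟨⟨hw, _⟩, hb⟩ => ⟨by omega, hw, hb⟩, fun ⟨_, hw, hb⟩ => ⟨⟨hw, by omega⟩, hb⟩⟩
  rw [if_congr hcond rfl rfl, ite_and]

lemma ballotSumEndingDown_succ (b : ℕ) :
    ballotSumEndingDown q (m + 1) b = ∑ w : Fin m → Bool, ballotWeight q b (Fin.snoc w false) := by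
  simp [ballotSumEndingDown, sum_pi_fin_succ_eq_sum_snoc, endsWithDown_snoc_iff]

lemma ballotSumEndingDown_succ_succ (b : ℕ) :
    ballotSumEndingDown q (m + 1) (b + 1) = if 2 * (b + 1) ≤ m + 1 then ballotSum q m b else 0 := by
  simp only [ballotSumEndingDown_succ, ballotWeight_snoc_false, ballotSum]
  split_ifs <;> simp

lemma ballotSumEndingDown_zero_right : ballotSumEndingDown q m 0 = 0 := by
  refine sum_eq_zero fun w _ => ?_
  split_ifs with hend
  · obtain ⟨i, -, hi⟩ := hend
    have hdown : 0 < stepCount false w m := card_pos.2 ⟨i, by simp [hi]⟩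
    exact if_neg fun h => hdown.ne' h.2
  · rfl

lemma ballotSum_succ (b : ℕ) :
    ballotSum q (m + 1) b =
      ballotSum q m b + (q ^ m - 1) * ballotSumEndingDown q m b +
        ballotSumEndingDown q (m + 1) b := by
  rw [ballotSum, sum_pi_fin_succ_eq_sum_snoc, Fintype.sum_bool, ballotSumEndingDown_succ,
    add_left_inj, ballotSum, ballotSumEndingDown, mul_sum, ← sum_add_distrib]
  refine sum_congr rfl fun w _ => ?_
  rw [ballotWeight_snoc_true]
  split_ifs <;> ring

lemma ballotSum_zero_zero : ballotSum q 0 0 = 1 := by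
  simp [ballotSum, ballotWeight, IsBallot, stepCount, majorIndex]

lemma ballotSum_eq_zero_of_lt {b : ℕ} (h : m < 2 * b) : ballotSum q m b = 0 := by
  refine sum_eq_zero fun w _ => if_neg fun ⟨hw, hb⟩ => ?_
  have := hw m le_rfl
  have := stepCount_true_add_false w
  omega

end BallotSums

section QAnalogues

variable {K : Type*} [Field K] {q : K}

variable (q) in
def qInt (d : ℕ) : K := (q ^ d - 1) / (q - 1)

variable (q) in
def qBinom (m b : ℕ) : K := ∏ i ∈ range b, qInt q (m - i) / qInt q (i + 1)

variable (q) in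
/-- `[m choose b] - q [m choose b-1]`, in a form that also covers `b = 0`. -/
def qBallot (m b : ℕ) : K :=
  qBinom q m b * (1 + q ^ (b + 1) * qInt q (m - 2 * b)) / qInt q (m - b + 1)

lemma sub_one_ne_zero_of_not_isOfFinOrder (hq : ¬IsOfFinOrder q) : q - 1 ≠ 0 :=
  sub_ne_zero.2 fun h => hq (h ▸ IsOfFinOrder.one)

lemma qInt_ne_zero (hq : ¬IsOfFinOrder q) {d : ℕ} (hd : d ≠ 0) : qInt q d ≠ 0 :=
  div_ne_zero
    (sub_ne_zero.2 fun h => hq (isOfFinOrder_iff_pow_eq_one.2 ⟨d, Nat.pos_of_ne_zero hd, h⟩))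
    (sub_one_ne_zero_of_not_isOfFinOrder hq)

lemma qBinom_succ_right (m b : ℕ) :
    qBinom q m (b + 1) = qBinom q m b * qInt q (m - b) / qInt q (b + 1) := by
  rw [qBinom, prod_range_succ, mul_div_assoc, qBinom]

lemma qBinom_succ_left_mul (m b : ℕ) :
    qBinom q (m + 1) b * qInt q (m + 1 - b) = qInt q (m + 1) * qBinom q m b := by
  induction b with
  | zero => simp [qBinom, mul_comm]
  | succ b ih =>
    rw [qBinom_succ_right, qBinom_succ_right, show m + 1 - (b + 1) = m - b by omega]
    linear_combination qInt q (m - b) / qInt q (b + 1) * ih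

lemma qBallot_zero_right (hq : ¬IsOfFinOrder q) (m : ℕ) : qBallot q m 0 = 1 := by
  rw [qBallot, div_eq_one_iff_eq (qInt_ne_zero hq (Nat.succ_ne_zero _))]
  have := sub_one_ne_zero_of_not_isOfFinOrder hq
  simp only [qBinom, qInt, prod_range_zero, one_mul, Nat.sub_zero, mul_zero, pow_succ]
  field_simp
  ring

lemma qBallot_succ_succ (hq : ¬IsOfFinOrder q) {m c : ℕ} (h : 2 * (c + 1) ≤ m) :
    qBallot q (m + 1) (c + 1) =
      qBallot q m (c + 1) + (q ^ m - 1) * qBallot q (m - 1) c + qBallot q m c := by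
  obtain ⟨e, rfl⟩ : ∃ e, m = 2 * c + 2 + e := ⟨m - (2 * c + 2), by omega⟩
  have hne : ∀ d, d ≠ 0 → qInt q d ≠ 0 := fun d hd => qInt_ne_zero hq hd
  -- All q-binomials involved are rational multiples of `C`; what remains is an identity of
  -- rational functions in `q`, `q ^ c` and `q ^ e`.
  set C := qBinom q (2 * c + 1 + e) c
  have hA : qBinom q (2 * c + 2 + e) c = C * qInt q (2 * c + 2 + e) / qInt q (c + e + 2) := by
    have h1 := qBinom_succ_left_mul (q := q) (2 * c + 1 + e) c
    rw [show 2 * c + 1 + e + 1 = 2 * c + 2 + e by ring,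
      show 2 * c + 2 + e - c = c + e + 2 by omega] at h1
    rw [eq_div_iff (hne _ (by omega))]
    linear_combination h1
  have hB : qBinom q (2 * c + 2 + e) (c + 1) = C * qInt q (2 * c + 2 + e) / qInt q (c + 1) := by
    rw [qBinom_succ_right, hA, show 2 * c + 2 + e - c = c + e + 2 by omega]
    field_simp [hne (c + e + 2) (by omega)]
  have hC : qBinom q (2 * c + 2 + e + 1) (c + 1) = C * qInt q (2 * c + 2 + e) *
      qInt q (2 * c + 2 + e + 1) / (qInt q (c + 1) * qInt q (c + e + 2)) := by
    have h2 := qBinom_succ_left_mul (q := q) (2 * c + 2 + e) (c + 1)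
    rw [show 2 * c + 2 + e + 1 - (c + 1) = c + e + 2 by omega, hB] at h2
    rw [eq_div_iff (mul_ne_zero (hne _ (by omega)) (hne _ (by omega)))]
    field_simp [hne (c + 1) (by omega)] at h2
    linear_combination h2
  simp only [qBallot, hA, hB, hC, show 2 * c + 2 + e - 1 = 2 * c + 1 + e by omega,
    show 2 * c + 2 + e + 1 - 2 * (c + 1) = e + 1 by omega,
    show 2 * c + 2 + e + 1 - (c + 1) + 1 = c + e + 3 by omega,
    show 2 * c + 2 + e - 2 * (c + 1) = e by omega,
    show 2 * c + 2 + e - (c + 1) + 1 = c + e + 2 by omega,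
    show 2 * c + 1 + e - 2 * c = e + 1 by omega,
    show 2 * c + 1 + e - c + 1 = c + e + 2 by omega,
    show 2 * c + 2 + e - 2 * c = e + 2 by omega,
    show 2 * c + 2 + e - c + 1 = c + e + 3 by omega]
  have := sub_one_ne_zero_of_not_isOfFinOrder hq
  have := hne (c + 1) (by omega)
  have := hne (c + e + 2) (by omega)
  have := hne (c + e + 3) (by omega)
  field_simp
  simp only [qInt, pow_add, pow_mul]
  field_simp
  ring

lemma qBallot_two_mul_succ (hq : ¬IsOfFinOrder q) (c : ℕ) :
    qBallot q (2 * c + 2) (c + 1) = qBallot q (2 * c + 1) c := by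
  have h1 := qBinom_succ_left_mul (q := q) (2 * c + 1) c
  rw [show 2 * c + 1 + 1 - c = c + 2 by omega] at h1
  simp only [qBallot, qBinom_succ_right, show 2 * c + 2 - c = c + 2 by omega,
    show 2 * c + 2 - 2 * (c + 1) = 0 by omega, show 2 * c + 2 - (c + 1) + 1 = c + 2 by omega,
    show 2 * c + 1 - 2 * c = 1 by omega, show 2 * c + 1 - c + 1 = c + 2 by omega, h1]
  have := sub_one_ne_zero_of_not_isOfFinOrder hq
  have := qInt_ne_zero hq c.succ_ne_zero
  have := qInt_ne_zero hq (c + 1).succ_ne_zero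
  field_simp
  simp only [qInt, pow_add, pow_mul]
  field_simp
  ring

lemma qBallot_two_mul (hq : ¬IsOfFinOrder q) (n : ℕ) :
    qBallot q (2 * n) n = ∏ i ∈ Icc 2 n, qInt q (2 * n + 2 - i) / qInt q i := by
  rcases n with _ | r
  · simpa using qBallot_zero_right hq 0
  have hq1 : qInt q 1 = 1 := by
    simpa [qInt] using div_self (sub_one_ne_zero_of_not_isOfFinOrder hq)
  rw [← Ico_add_one_right_eq_Icc, prod_Ico_eq_prod_range, prod_div_distrib, qBallot, qBinom,
    prod_div_distrib, prod_range_succ, prod_range_succ' (fun i => qInt q (i + 1)), hq1]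
  simp only [show 2 * (r + 1) - 2 * (r + 1) = 0 by omega,
    show 2 * (r + 1) - (r + 1) + 1 = r + 2 by omega, show 2 * (r + 1) - r = r + 2 by omega,
    show r + 1 + 1 - 2 = r by omega]
  have hnum : ∏ x ∈ range r, qInt q (2 * (r + 1) + 2 - (2 + x)) =
      ∏ x ∈ range r, qInt q (2 * (r + 1) - x) :=
    prod_congr rfl fun x _ => by rw [show 2 * (r + 1) + 2 - (2 + x) = 2 * (r + 1) - x by omega]
  have hden : ∏ x ∈ range r, qInt q (2 + x) = ∏ x ∈ range r, qInt q (x + 1 + 1) :=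
    prod_congr rfl fun x _ => by rw [add_comm 2 x]
  have := qInt_ne_zero hq (r + 1).succ_ne_zero
  have hq0 : qInt q 0 = 0 := by simp [qInt]
  rw [hnum, hden, hq0, mul_zero, add_zero, mul_one, mul_one]
  field_simp

end QAnalogues

theorem ballotSum_eq_qBallot {K : Type*} [Field K] {q : K} (hq : ¬IsOfFinOrder q) :
    ∀ {m b : ℕ}, 2 * b ≤ m → ballotSum q m b = qBallot q m b
  | 0, b, h => by
    obtain rfl : b = 0 := by omega
    rw [ballotSum_zero_zero, qBallot_zero_right hq]
  | m + 1, 0, _ => by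
    rw [ballotSum_succ, ballotSumEndingDown_zero_right, ballotSumEndingDown_zero_right,
      ballotSum_eq_qBallot hq m.zero_le, qBallot_zero_right hq, qBallot_zero_right hq]
    ring
  | m + 1, c + 1, h => by
    rw [ballotSum_succ, ballotSumEndingDown_succ_succ, if_pos h,
      ballotSum_eq_qBallot hq (show 2 * c ≤ m by omega)]
    rcases Nat.lt_or_ge m (2 * (c + 1)) with hm | hm
    · obtain rfl : m = 2 * c + 1 := by omega
      rw [ballotSum_eq_zero_of_lt q hm, ballotSumEndingDown_succ_succ, if_neg (by omega),
        qBallot_two_mul_succ hq]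
      ring
    · obtain ⟨m, rfl⟩ : ∃ m', m = m' + 1 := ⟨m - 1, by omega⟩
      rw [ballotSum_eq_qBallot hq hm, ballotSumEndingDown_succ_succ, if_pos (by omega),
        ballotSum_eq_qBallot hq (show 2 * c ≤ m by omega), qBallot_succ_succ hq hm,
        Nat.add_sub_cancel]

lemma isDyckPath_iff {n : ℕ} (w : Fin (2 * n) → Bool) :
    IsDyckPath n w ↔ IsBallot w ∧ stepCount false w (2 * n) = n := by
  change IsBallot w ∧ stepCount true w (2 * n) = n ↔ _
  have := stepCount_true_add_false w
  exact and_congr Iff.rfl ⟨fun h => by omega, fun h => by omega⟩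

lemma algebraMap_dyckMajPoly (n : ℕ) :
    algebraMap (Polynomial ℚ) (RatFunc ℚ) ((dyckMajPoly n).map (Nat.castRingHom ℚ)) =
      ballotSum (RatFunc.X : RatFunc ℚ) (2 * n) n := by
  simp only [dyckMajPoly, Polynomial.map_sum, Polynomial.map_pow, Polynomial.map_X, map_sum,
    map_pow, RatFunc.algebraMap_X, ballotSum, ballotWeight, ← sum_filter]
  exact sum_congr (filter_congr fun w _ => isDyckPath_iff w) fun _ _ => rfl

lemma RatFunc.not_isOfFinOrder_X : ¬IsOfFinOrder (RatFunc.X : RatFunc ℚ) := by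
  rw [isOfFinOrder_iff_pow_eq_one]
  rintro ⟨d, hd, h⟩
  rw [← RatFunc.algebraMap_X, ← map_pow, ← map_one (algebraMap (Polynomial ℚ) (RatFunc ℚ)),
    (RatFunc.algebraMap_injective ℚ).eq_iff] at h
  simpa [hd.ne'] using congrArg Polynomial.natDegree h

theorem stmt_1_general (n : ℕ) :
    ∏ i ∈ Finset.Icc 2 n,
        (((RatFunc.X : RatFunc ℚ) ^ (2 * n + 2 - i) - 1) / (RatFunc.X - 1)) /
          ((RatFunc.X ^ i - 1) / (RatFunc.X - 1)) =
      algebraMap (Polynomial ℚ) (RatFunc ℚ) ((dyckMajPoly n).map (Nat.castRingHom ℚ)) := by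
  rw [algebraMap_dyckMajPoly, ballotSum_eq_qBallot RatFunc.not_isOfFinOrder_X le_rfl,
    qBallot_two_mul RatFunc.not_isOfFinOrder_X]
  rfl

theorem stmt_1 (n : ℕ) (hn : 1 ≤ n) :
    ∏ i ∈ Finset.Icc 2 n,
        (((RatFunc.X : RatFunc ℚ) ^ (2 * n + 2 - i) - 1) / (RatFunc.X - 1)) /
          ((RatFunc.X ^ i - 1) / (RatFunc.X - 1)) =
      algebraMap (Polynomial ℚ) (RatFunc ℚ) ((dyckMajPoly n).map (Nat.castRingHom ℚ)) :=
  stmt_1_general n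
end

section
/- The number of alternating sign matrices ∏_{k=0}^{n-1} (3k+1)!/(n+k)! equals the product over pairs 0 ≤ k ≤ n-k-2 of ∏_{d=3k+2}^{n+k} (3n - d)/d. -/
/-!
Write `f k = (3k+1)!/(n+k)!`. For `2k+2 ≤ n` the numerators `3n - d`, `d ∈ [3k+2, n+k]`, run
over `[n+k'+1, 3k'+1]` with `k' = n-1-k`, so the inner product equals `f k * f k'`; for the other
`k` it is empty. Hence the right-hand side is the left-hand side with its factors grouped in the
pairs `{k, n-1-k}`, the middle factor (when `n = 2k+1`) being `(3k+1)!/(3k+1)! = 1`.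
-/

open Finset Nat

theorem Nat.factorial_div_factorial_eq_prod_Icc {K : Type*} [Field K] [CharZero K] {a b : ℕ}
    (h : a ≤ b) : (b ! : K) / a ! = ∏ d ∈ Icc (a + 1) b, (d : K) := by
  induction b, h using Nat.le_induction with
  | base => simp [Nat.factorial_ne_zero]
  | succ b hb ih =>
    rw [prod_Icc_succ_top (by omega), ← ih, Nat.factorial_succ, Nat.cast_mul]
    ring

theorem Finset.prod_Icc_natCast_sub {R : Type*} [CommRing R] {a b N : ℕ} (ha : a ≤ N)
    (hb : b ≤ N) :
    ∏ d ∈ Icc a b, ((N : R) - d) = ∏ e ∈ Icc (N - b) (N - a), (e : R) := by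
  refine prod_nbij' (fun d => N - d) (fun e => N - e) ?_ ?_ ?_ ?_ ?_ <;>
    intro x hx <;> simp only [mem_Icc] at hx ⊢
  iterate 4 omega
  rw [Nat.cast_sub (by omega)]

theorem Finset.prod_range_eq_prod_mul_reflect {M : Type*} [CommMonoid M] (f : ℕ → M) (n : ℕ)
    (hmid : ∀ k, 2 * k + 1 = n → f k = 1) :
    ∏ k ∈ range n, f k = ∏ k ∈ range n with 2 * k + 2 ≤ n, f k * f (n - 1 - k) := by
  have reflect : ∏ k ∈ range n with 2 * k + 2 ≤ n, f (n - 1 - k) =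
      ∏ k ∈ range n with n ≤ 2 * k, f k := by
    refine prod_nbij' (fun k => n - 1 - k) (fun k => n - 1 - k) ?_ ?_ ?_ ?_ ?_ <;>
      intro x hx <;> simp only [mem_filter, mem_range] at hx ⊢
    iterate 4 omega
  have upper :
      ∏ k ∈ range n with n ≤ 2 * k, f k = ∏ k ∈ range n with ¬ 2 * k + 2 ≤ n, f k := by
    refine prod_subset (fun x hx => ?_) (fun x hx hx' => hmid x ?_)
    · simp only [mem_filter, mem_range] at hx ⊢
      omega
    · simp only [mem_filter, mem_range] at hx hx'
      omega
  rw [prod_mul_distrib, reflect, upper, prod_filter_mul_prod_filter_not]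

theorem prod_Icc_three_mul_sub_div {K : Type*} [Field K] [CharZero K] {n k : ℕ}
    (hk : 2 * k + 2 ≤ n) :
    ∏ d ∈ Icc (3 * k + 2) (n + k), ((3 * n - d : K) / d) =
      ((3 * k + 1)! / (n + k)! : K) * ((3 * (n - 1 - k) + 1)! / (n + (n - 1 - k))! : K) := by
  have numerator : ∏ d ∈ Icc (3 * k + 2) (n + k), (3 * n - d : K) =
      (3 * (n - 1 - k) + 1)! / (n + (n - 1 - k))! := by
    have reflect := prod_Icc_natCast_sub (R := K) (a := 3 * k + 2) (b := n + k) (N := 3 * n)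
      (by omega) (by omega)
    push_cast at reflect
    rw [reflect, Nat.factorial_div_factorial_eq_prod_Icc (by omega),
      show 3 * n - (n + k) = n + (n - 1 - k) + 1 by omega,
      show 3 * n - (3 * k + 2) = 3 * (n - 1 - k) + 1 by omega]
  have denominator : ∏ d ∈ Icc (3 * k + 2) (n + k), (d : K) = (n + k)! / (3 * k + 1)! :=
    (Nat.factorial_div_factorial_eq_prod_Icc (by omega)).symm
  rw [prod_div_distrib, numerator, denominator, div_div_eq_mul_div, mul_div_assoc, mul_comm]

theorem stmt_2 (n : ℕ) :
    ∏ k ∈ Finset.range n, (Nat.factorial (3 * k + 1) : ℚ) / (Nat.factorial (n + k)) =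
      ∏ k ∈ (Finset.range n).filter (fun k => 2 * k + 2 ≤ n),
        ∏ d ∈ Finset.Icc (3 * k + 2) (n + k), ((3 * n - d : ℚ) / (d : ℚ)) := by
  rw [prod_range_eq_prod_mul_reflect _ n fun k hk => by
    rw [← hk, show 2 * k + 1 + k = 3 * k + 1 by omega]
    exact div_self (by positivity)]
  refine prod_congr rfl fun k hk => (prod_Icc_three_mul_sub_div ?_).symm
  exact (mem_filter.mp hk).2
end

section
/- The 2-stack-sortable number 2·(3n)!/((2n+1)!·(n+1)!) equals ∏_{i=3}^{n+1} (3n+3-i)/i for all n ≥ 1. -/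
/-!
Reflecting `i ↦ 3n + 3 - i` turns the numerators into `(2n+2)⋯(3n) = (3n)!/(2n+1)!`, while the
denominators multiply to `3⋯(n+1) = (n+1)!/2`.
-/

open Finset Nat

theorem Nat.factorial_mul_prod_Icc_id {a b : ℕ} (h : a ≤ b) :
    a ! * ∏ i ∈ Icc (a + 1) b, i = b ! := by
  rw [← prod_Ico_id_eq_factorial, ← prod_Ico_id_eq_factorial, ← Ico_add_one_right_eq_Icc,
    prod_Ico_consecutive _ (by omega) (by omega)]

theorem Finset.prod_Icc_natCast_eq_factorial_div (K : Type*) [Field K] [CharZero K] {a b : ℕ}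
    (h : a ≤ b) : ∏ i ∈ Icc (a + 1) b, (i : K) = b ! / a ! := by
  rw [eq_div_iff (Nat.cast_ne_zero.mpr a.factorial_ne_zero), mul_comm, ← Nat.cast_prod,
    ← Nat.cast_mul, factorial_mul_prod_Icc_id h]

theorem Finset.prod_Icc_const_sub {M : Type*} [CommMonoid M] (f : ℕ → M) {a b c : ℕ}
    (ha : a ≤ c) (hb : b ≤ c) :
    ∏ i ∈ Icc a b, f (c - i) = ∏ j ∈ Icc (c - b) (c - a), f j := by
  refine prod_nbij' (c - ·) (c - ·) ?_ ?_ ?_ ?_ fun _ _ ↦ rfl <;>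
    intro i hi <;> simp only [Finset.mem_Icc] at * <;> omega

theorem stmt_3 (n : ℕ) (hn : 1 ≤ n) :
    (2 * Nat.factorial (3 * n) : ℚ) /
        (Nat.factorial (2 * n + 1) * Nat.factorial (n + 1)) =
      ∏ i ∈ Finset.Icc 3 (n + 1), ((3 * n + 3 - i : ℚ) / (i : ℚ)) := by
  have hnum : ∏ i ∈ Icc 3 (n + 1), (3 * n + 3 - i : ℚ) = (3 * n)! / (2 * n + 1)! := by
    calc ∏ i ∈ Icc 3 (n + 1), (3 * n + 3 - i : ℚ)
        = ∏ i ∈ Icc 3 (n + 1), ((3 * n + 3 - i : ℕ) : ℚ) :=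
          prod_congr rfl fun i hi ↦ by
            rw [mem_Icc] at hi
            rw [Nat.cast_sub (by omega)]
            push_cast
            rfl
      _ = ∏ j ∈ Icc (2 * n + 1 + 1) (3 * n), (j : ℚ) := by
          rw [prod_Icc_const_sub (fun j ↦ (j : ℚ)) (by omega) (by omega),
            show 3 * n + 3 - (n + 1) = 2 * n + 1 + 1 by omega,
            show 3 * n + 3 - 3 = 3 * n by omega]
      _ = (3 * n)! / (2 * n + 1)! := prod_Icc_natCast_eq_factorial_div ℚ (by omega)
  have hden : ∏ i ∈ Icc 3 (n + 1), (i : ℚ) = (n + 1)! / 2 :=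
    prod_Icc_natCast_eq_factorial_div ℚ (a := 2) (by omega)
  rw [prod_div_distrib, hnum, hden]
  field_simp
end

section
/- The Coxeter-Catalan number of type D_n, namely (3n-2)·c_{n-1} where c_m is the m-th Catalan number, equals the Milnor number of the weak Weight (4, 2n, 6, 9, 12, ..., 3n-3 ; 6n), i.e., equals (6n-4)/4 · (6n-2n)/(2n) · ∏_{j=2}^{n-1} (6n-3j)/(3j). -/
/-! After cancelling 3, the product is $\prod_{j=2}^{n-1} (2n-j)/j = (2n-2)! / (n! (n-1)!) = c_{n-1}$,
while the two leading factors are $(3n-2)/2$ and $2$. -/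

open Finset Nat

theorem catalan_mul_factorial_mul_factorial_succ (m : ℕ) :
    catalan m * m ! * (m + 1)! = (2 * m)! := by
  have hchoose := choose_mul_factorial_mul_factorial (show m ≤ 2 * m by omega)
  rw [show 2 * m - m = m by omega] at hchoose
  rw [← hchoose, ← centralBinom_eq_two_mul_choose, ← succ_mul_catalan_eq_centralBinom,
    factorial_succ]
  ring

theorem catalan_succ_mul_factorial (m : ℕ) :
    catalan (m + 1) * (m + 1)! = (2 * m + 2).descFactorial m := by
  have hdesc := factorial_mul_descFactorial (show m ≤ 2 * m + 2 by omega)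
  rw [show 2 * m + 2 - m = m + 2 by omega] at hdesc
  apply Nat.eq_of_mul_eq_mul_left (factorial_pos (m + 2))
  rw [hdesc, show 2 * m + 2 = 2 * (m + 1) by ring, ← catalan_mul_factorial_mul_factorial_succ]
  ring

theorem prod_Icc_two_eq_prod_range {M : Type*} [CommMonoid M] (f : ℕ → M) (m : ℕ) :
    ∏ j ∈ Icc 2 (m + 1), f j = ∏ i ∈ range m, f (i + 2) := by
  rw [← Ico_add_one_right_eq_Icc, prod_Ico_eq_prod_range]
  simp only [show m + 1 + 1 - 2 = m by omega, add_comm 2]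

theorem cast_catalan_succ_eq_prod (m : ℕ) :
    (catalan (m + 1) : ℚ) = ∏ j ∈ Icc 2 (m + 1), ((2 * (m + 2) - j : ℚ) / j) := by
  have hnum : ∏ i ∈ range m, ((2 * (m + 2) - (i + 2 : ℕ) : ℚ)) =
      (2 * m + 2).descFactorial m := by
    rw [descFactorial_eq_prod_range, cast_prod]
    refine prod_congr rfl fun i hi => ?_
    rw [cast_sub (by simp at hi; omega)]
    push_cast
    ring
  have hden : ∏ i ∈ range m, ((i + 2 : ℕ) : ℚ) = (m + 1)! := by
    rw [← prod_range_add_one_eq_factorial, prod_range_succ']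
    push_cast
    simp [add_assoc, one_add_one_eq_two]
  rw [prod_Icc_two_eq_prod_range, prod_div_distrib, hnum, hden, ← catalan_succ_mul_factorial]
  push_cast
  field_simp

theorem stmt_5 (n : ℕ) (hn : 2 ≤ n) :
    ((3 * n - 2 : ℚ)) * (catalan (n - 1)) =
      ((6 * n - 4 : ℚ) / 4) * ((6 * n - 2 * n : ℚ) / (2 * n)) *
        ∏ j ∈ Finset.Icc 2 (n - 1), ((6 * n - 3 * j : ℚ) / (3 * j : ℚ)) := by
  obtain ⟨m, rfl⟩ : ∃ m, n = m + 2 := ⟨n - 2, by omega⟩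
  have hprod : ∏ j ∈ Icc 2 (m + 1), ((6 * ((m + 2 : ℕ) : ℚ) - 3 * j) / (3 * j)) =
      catalan (m + 1) := by
    rw [cast_catalan_succ_eq_prod]
    refine prod_congr rfl fun j _ => ?_
    rw [← mul_div_mul_left _ _ (three_ne_zero' ℚ)]
    push_cast
    ring
  rw [show m + 2 - 1 = m + 1 from rfl, hprod]
  push_cast
  field_simp
  ring
end

section
/- The Weight (2,4,6,7 ; 18) admits two different factorizations: its multiset of degrees splits as {2} ∪ {4,6,7} and as {6} ∪ {2,4,7} (noting (2;18) = (1;9) and (6;18) = (1;3)), and for each of the four corresponding quotients ∏_{d∈S}[18-d]_q/[d]_q is a polynomial in ℕ[q]. -/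
/-- A sub-multiset `S` of degrees, with total degree `D`, defines a Weight when
`∏_{d ∈ S} [D-d]_q / [d]_q` is a polynomial with nonnegative integer coefficients. -/
def IsWeightQuotient (D : ℕ) (S : Multiset ℕ) : Prop :=
  ∃ p : Polynomial ℕ,
    (S.map (fun d => ((RatFunc.X : RatFunc ℚ) ^ (D - d) - 1) / (RatFunc.X ^ d - 1))).prod =
      algebraMap (Polynomial ℚ) (RatFunc ℚ) (p.map (Nat.castRingHom ℚ))

open Polynomial in
lemma hcast (d : ℕ) : (RatFunc.X : RatFunc ℚ) ^ d - 1
    = algebraMap (Polynomial ℚ) (RatFunc ℚ) (Polynomial.X ^ d - 1) := by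
  simp [map_sub, map_pow, RatFunc.algebraMap_X]

open Polynomial in
lemma hne (d : ℕ) (hd : 0 < d) : ((Polynomial.X : Polynomial ℚ) ^ d - 1) ≠ 0 := by
  have := Polynomial.X_pow_sub_C_ne_zero (R := ℚ) hd 1
  simpa using this

open Polynomial in
lemma key (p : Polynomial ℕ) (num den : Polynomial ℚ) (hden : den ≠ 0)
    (h : p.map (Nat.castRingHom ℚ) * den = num) :
    algebraMap (Polynomial ℚ) (RatFunc ℚ) num / algebraMap (Polynomial ℚ) (RatFunc ℚ) den
      = algebraMap (Polynomial ℚ) (RatFunc ℚ) (p.map (Nat.castRingHom ℚ)) := by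
  rw [div_eq_iff (by simpa using (RatFunc.algebraMap_ne_zero hden)), ← map_mul, h]

theorem stmt_13 :
    ({2} + {4, 6, 7} : Multiset ℕ) = ({2, 4, 6, 7} : Multiset ℕ) ∧
    ({6} + {2, 4, 7} : Multiset ℕ) = ({2, 4, 6, 7} : Multiset ℕ) ∧
    IsWeightQuotient 18 {2} ∧ IsWeightQuotient 18 {4, 6, 7} ∧
    IsWeightQuotient 18 {6} ∧ IsWeightQuotient 18 {2, 4, 7} := by
  refine ⟨rfl, by decide, ?_, ?_, ?_, ?_⟩
  · refine ⟨1 + Polynomial.X^2 + Polynomial.X^4 + Polynomial.X^6 + Polynomial.X^8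
      + Polynomial.X^10 + Polynomial.X^12 + Polynomial.X^14, ?_⟩
    simp only [IsWeightQuotient, Multiset.map_singleton, Multiset.prod_singleton]
    rw [show (18:ℕ) - 2 = 16 from rfl, hcast 16, hcast 2]
    exact key _ _ _ (hne 2 (by norm_num)) (by
      simp only [Polynomial.map_add, Polynomial.map_pow, Polynomial.map_one, Polynomial.map_X]
      ring)
  · refine ⟨1 + Polynomial.X^4 + Polynomial.X^6 + Polynomial.X^7 + Polynomial.X^8
      + Polynomial.X^10 + Polynomial.X^12 + Polynomial.X^13 + Polynomial.X^14
      + Polynomial.X^16 + Polynomial.X^20, ?_⟩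
    simp only [Multiset.insert_eq_cons, Multiset.map_cons, Multiset.map_singleton,
      Multiset.prod_cons, Multiset.prod_singleton]
    rw [show (18:ℕ) - 4 = 14 from rfl, show (18:ℕ) - 6 = 12 from rfl,
      show (18:ℕ) - 7 = 11 from rfl, hcast 14, hcast 4, hcast 12, hcast 6,
      hcast 11, hcast 7, div_mul_div_comm, div_mul_div_comm, ← map_mul, ← map_mul,
      ← map_mul, ← map_mul]
    exact key _ _ _ (by
      refine mul_ne_zero ?_ (mul_ne_zero ?_ ?_) <;> exact hne _ (by norm_num)) (by
      simp only [Polynomial.map_add, Polynomial.map_pow, Polynomial.map_one, Polynomial.map_X]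
      ring)
  · refine ⟨1 + Polynomial.X^6, ?_⟩
    simp only [IsWeightQuotient, Multiset.map_singleton, Multiset.prod_singleton]
    rw [show (18:ℕ) - 6 = 12 from rfl, hcast 12, hcast 6]
    exact key _ _ _ (hne 6 (by norm_num)) (by
      simp only [Polynomial.map_add, Polynomial.map_pow, Polynomial.map_one, Polynomial.map_X]
      ring)
  · refine ⟨1 + Polynomial.X^2 + 2*Polynomial.X^4 + 2*Polynomial.X^6 + Polynomial.X^7
      + 3*Polynomial.X^8 + Polynomial.X^9 + 3*Polynomial.X^10 + Polynomial.X^11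
      + 4*Polynomial.X^12 + Polynomial.X^13 + 4*Polynomial.X^14 + Polynomial.X^15
      + 4*Polynomial.X^16 + Polynomial.X^17 + 3*Polynomial.X^18 + Polynomial.X^19
      + 3*Polynomial.X^20 + Polynomial.X^21 + 2*Polynomial.X^22 + 2*Polynomial.X^24
      + Polynomial.X^26 + Polynomial.X^28, ?_⟩
    simp only [Multiset.insert_eq_cons, Multiset.map_cons, Multiset.map_singleton,
      Multiset.prod_cons, Multiset.prod_singleton]
    rw [show (18:ℕ) - 2 = 16 from rfl, show (18:ℕ) - 4 = 14 from rfl,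
      show (18:ℕ) - 7 = 11 from rfl, hcast 16, hcast 2, hcast 14, hcast 4,
      hcast 11, hcast 7, div_mul_div_comm, div_mul_div_comm, ← map_mul, ← map_mul,
      ← map_mul, ← map_mul]
    exact key _ _ _ (by
      refine mul_ne_zero ?_ (mul_ne_zero ?_ ?_) <;> exact hne _ (by norm_num)) (by
      simp only [Polynomial.map_add, Polynomial.map_pow, Polynomial.map_one, Polynomial.map_X,
        Polynomial.map_mul, Polynomial.map_ofNat]
      ring)
end
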